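/- For the ASI-SSP(3',3',2) family A(delta) = [[0,0,0,0],[0,5/6,0,0],[0,1/(3 delta) - 5/6, 5/6, 0],[0,(1+6 delta)/(3(2-5 delta)), -17 delta/(6(2-5 delta)), 5/6]] with delta ≠ 0 and delta ≠ 2/5, the last row always sums to 1, and for every such delta at least one entry of A(delta) is negative (so the scheme can never have all nonnegative coefficients). -/

import Mathlib

noncomputable def A3p3p2 (δ : ℝ) : Matrix (Fin 4) (Fin 4) ℝ :=
  !![0, 0, 0, 0;
     0, 5/6, 0, 0;
     0, 1/(3*δ) - 5/6, 5/6, 0;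
     0, (1 + 6*δ)/(3*(2 - 5*δ)), -17*δ/(6*(2 - 5*δ)), 5/6]

/-! Negativity is a sign chase over three entries: `a₂₁ < 0` for `δ ≤ 0`, `a₃₂ < 0` on
`(0, 2/5)` and `a₃₁ < 0` on `(2/5, ∞)`. -/

namespace A3p3p2

variable {δ : ℝ}

theorem apply_two_one : A3p3p2 δ 2 1 = 1/(3*δ) - 5/6 := rfl

theorem apply_three_one : A3p3p2 δ 3 1 = (1 + 6*δ)/(3*(2 - 5*δ)) := rfl

theorem apply_three_two : A3p3p2 δ 3 2 = -17*δ/(6*(2 - 5*δ)) := rfl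

theorem row_three_sum (h : δ ≠ 2/5) : ∑ j, A3p3p2 δ 3 j = 1 := by
  -- `field_simp` normalizes the denominator `2 - 5 * δ` to this form before looking for it.
  have hden : 2 - δ * 5 ≠ 0 := sub_ne_zero.2 fun h' => h (by linarith)
  rw [Fin.sum_univ_four, apply_three_one, apply_three_two]
  change 0 + _ + _ + 5/6 = (1 : ℝ)
  field_simp
  ring

-- At `δ = 0` Lean's `1 / 0 = 0` leaves `a₂₁ = -5/6`, so the closed half-line is covered.
theorem two_one_neg (h : δ ≤ 0) : A3p3p2 δ 2 1 < 0 := by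
  have hinv : 1 / (3 * δ) ≤ 0 := div_nonpos_of_nonneg_of_nonpos zero_le_one (by linarith)
  rw [apply_two_one]
  linarith

theorem three_two_neg (h₀ : 0 < δ) (h : δ < 2/5) : A3p3p2 δ 3 2 < 0 := by
  rw [apply_three_two]
  exact div_neg_of_neg_of_pos (by linarith) (by linarith)

theorem three_one_neg (h : 2/5 < δ) : A3p3p2 δ 3 1 < 0 := by
  rw [apply_three_one]
  exact div_neg_of_pos_of_neg (by linarith) (by linarith)

theorem exists_neg (h : δ ≠ 2/5) : ∃ i j, A3p3p2 δ i j < 0 := by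
  rcases le_or_gt δ 0 with hnonpos | hpos
  · exact ⟨2, 1, two_one_neg hnonpos⟩
  rcases h.lt_or_gt with hlt | hgt
  · exact ⟨3, 2, three_two_neg hpos hlt⟩
  · exact ⟨3, 1, three_one_neg hgt⟩

end A3p3p2

theorem asiSSP3p3p2_properties_general (δ : ℝ) (hδ' : δ ≠ 2/5) :
    (∑ j, A3p3p2 δ 3 j) = 1 ∧ (∃ i j, A3p3p2 δ i j < 0) :=
  ⟨A3p3p2.row_three_sum hδ', A3p3p2.exists_neg hδ'⟩

/-- For every admissible δ, the last row of A(δ) sums to 1, and A(δ) has a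
negative entry. -/
theorem asiSSP3p3p2_properties (δ : ℝ) (hδ : δ ≠ 0) (hδ' : δ ≠ 2/5) :
    (∑ j, A3p3p2 δ 3 j) = 1 ∧ (∃ i j, A3p3p2 δ i j < 0) :=
  asiSSP3p3p2_properties_general δ hδ'
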